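/- arXiv:2206.05461 — 6 statements merged into one kernel-verified Lean document; each statement's English description precedes it below -/
import Mathlib

section
/- Let ℓ ≥ 1 be an integer and let g : ℝ → ℝ be (2ℓ+1)-times continuously differentiable with iteratedDeriv k g 0 = 0 for every k with 1 ≤ k ≤ 2ℓ, and A := iteratedDeriv (2ℓ+1) g 0 ≠ 0. Then there exist δ ∈ (0,1) and ε₀ > 0 such that for every continuous function p : ℝ → ℝ satisfying |p(y)| ≤ ε₀ and p(y)·A < 0 for all y ∈ [−1,1], there exist y₁ ∈ (−δ,0) and y₂ ∈ (0,δ) with deriv g y₁ + p(y₁) = 0 and deriv g y₂ + p(y₂) = 0. -/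
open Set


lemma myWithinEq {n : ℕ} {f : ℝ → ℝ} (hf : ContDiff ℝ (n : ℕ) f)
    {m : ℕ} (hm : m ≤ n) {s : Set ℝ} (hs : UniqueDiffOn ℝ s) {x : ℝ} (hx : x ∈ s) :
    iteratedDerivWithin m f s x = iteratedDeriv m f x := by
  rw [iteratedDerivWithin_eq_iteratedFDerivWithin, iteratedDeriv_eq_iteratedFDeriv]
  congr 1
  have h1 : HasFTaylorSeriesUpTo (n : ℕ∞) f (ftaylorSeries ℝ f) :=
    contDiff_iff_ftaylorSeries.mp (by exact_mod_cast hf)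
  have h2 := (h1.hasFTaylorSeriesUpToOn s).eq_iteratedFDerivWithin_of_uniqueDiffOn
    (by exact_mod_cast hm) hs hx
  exact h2.symm

lemma myTaylorPt {m : ℕ} {h : ℝ → ℝ} (hh : ContDiff ℝ ((m + 1 : ℕ)) h)
    (hv : ∀ k ≤ m, iteratedDeriv k h 0 = 0) {δ : ℝ} (hδ : 0 < δ) :
    ∃ ξ ∈ Ioo (0 : ℝ) δ,
      h δ = iteratedDeriv (m + 1) h ξ * δ ^ (m + 1) / (Nat.factorial (m + 1)) := by
  have hs : UniqueDiffOn ℝ (Icc (0 : ℝ) δ) := uniqueDiffOn_Icc hδ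
  have hdiff : DifferentiableOn ℝ (iteratedDerivWithin m h (Icc 0 δ)) (Ioo 0 δ) := by
    have hd : Differentiable ℝ (iteratedDeriv m h) :=
      hh.differentiable_iteratedDeriv m (by exact_mod_cast Nat.lt_succ_self m)
    refine hd.differentiableOn.congr fun x hx => ?_
    exact myWithinEq hh (Nat.le_succ m) hs (Ioo_subset_Icc_self hx)
  obtain ⟨ξ, hξ, heq⟩ := taylor_mean_remainder_lagrange (n := m) hδ.ne
    (by rw [uIcc_of_le hδ.le]; exact hh.contDiffOn.of_le (by exact_mod_cast Nat.le_succ m))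
    (by rw [uIcc_of_le hδ.le, uIoo_of_le hδ.le]; exact hdiff)
  rw [uIoo_of_le hδ.le] at hξ
  rw [uIcc_of_le hδ.le] at heq
  refine ⟨ξ, hξ, ?_⟩
  have htay : taylorWithinEval h m (Icc 0 δ) 0 δ = 0 := by
    rw [taylor_within_apply]
    refine Finset.sum_eq_zero fun k hk => ?_
    rw [myWithinEq hh (le_trans (Nat.le_of_lt_succ (Finset.mem_range.mp hk)) (Nat.le_succ m)) hs
      (left_mem_Icc.mpr hδ.le), hv k (Nat.le_of_lt_succ (Finset.mem_range.mp hk))]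
    simp
  rw [htay, sub_zero, sub_zero] at heq
  rw [heq, myWithinEq hh le_rfl hs (Ioo_subset_Icc_self hξ)]

/-- Existence half of Theorem 2.8(1): if g is C^{2ℓ+1} with vanishing derivatives
of orders 1,…,2ℓ at 0 and A := g^{(2ℓ+1)}(0) ≠ 0, then there are δ ∈ (0,1) and ε₀ > 0
such that any continuous p with |p| ≤ ε₀ and p·A < 0 on [−1,1] yields two solutions
of g'(y) + p(y) = 0, one in (−δ,0) and one in (0,δ). -/
theorem stmt0 (ℓ : ℕ) (hℓ : 1 ≤ ℓ) (g : ℝ → ℝ)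
    (hg : ContDiff ℝ (2 * ℓ + 1 : ℕ) g)
    (hvanish : ∀ k : ℕ, 1 ≤ k → k ≤ 2 * ℓ → iteratedDeriv k g 0 = 0)
    (hA : iteratedDeriv (2 * ℓ + 1) g 0 ≠ 0) :
    ∃ δ ∈ Ioo (0 : ℝ) 1, ∃ ε₀ > (0 : ℝ),
      ∀ p : ℝ → ℝ, Continuous p →
        (∀ y ∈ Icc (-1 : ℝ) 1, |p y| ≤ ε₀ ∧ p y * iteratedDeriv (2 * ℓ + 1) g 0 < 0) →
        (∃ y₁ ∈ Ioo (-δ) (0 : ℝ), deriv g y₁ + p y₁ = 0) ∧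
        (∃ y₂ ∈ Ioo (0 : ℝ) δ, deriv g y₂ + p y₂ = 0) := by
  obtain ⟨j, rfl⟩ : ∃ j, ℓ = j + 1 := ⟨ℓ - 1, by omega⟩
  set A := iteratedDeriv (2 * (j + 1) + 1) g 0 with hAdef
  set m := 2 * j + 1 with hmdef
  have hmg : 2 * (j + 1) + 1 = m + 2 := by omega
  have hg2 : ContDiff ℝ ((m + 2 : ℕ)) g := by rwa [hmg] at hg
  have hh : ContDiff ℝ ((m + 1 : ℕ)) (deriv g) := by
    have hcast : ((m + 2 : ℕ) : WithTop ℕ∞) = ((m + 1 : ℕ) : WithTop ℕ∞) + 1 := by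
      push_cast; ring
    rw [hcast] at hg2
    exact (contDiff_succ_iff_deriv.mp hg2).2.2
  have hDg : ∀ k : ℕ, ∀ x : ℝ, iteratedDeriv k (deriv g) x = iteratedDeriv (k + 1) g x := by
    intro k x; rw [iteratedDeriv_succ']
  have hv : ∀ k ≤ m, iteratedDeriv k (deriv g) 0 = 0 := by
    intro k hk; rw [hDg]; exact hvanish (k + 1) (by omega) (by omega)
  set D := iteratedDeriv (m + 1) (deriv g) with hDdef
  have hDA : D 0 = A := by rw [hDdef, hDg, show m + 1 + 1 = 2 * (j + 1) + 1 from by omega]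
  have hDcont : Continuous D :=
    hh.continuous_iteratedDeriv (m + 1) (by exact_mod_cast le_rfl)
  have hAabs : 0 < |A| := abs_pos.mpr hA
  obtain ⟨r, hr, hball⟩ := Metric.continuousAt_iff.mp (hDcont.continuousAt (x := 0)) (|A| / 2)
    (by positivity)
  set δ := min (r / 2) (2⁻¹ : ℝ) with hδdef
  have hδ0 : 0 < δ := lt_min (by linarith) (by norm_num)
  have hδ1 : δ < 1 := lt_of_le_of_lt (min_le_right _ _) (by norm_num)
  have hδr : δ < r := lt_of_le_of_lt (min_le_left _ _) (by linarith)
  have key : ∀ x : ℝ, |x| < r → 0 < D x * A := by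
    intro x hx
    have hd := hball (x := x) (by simpa [Real.dist_eq] using hx)
    rw [hDA, Real.dist_eq] at hd
    have h1 := abs_lt.mp hd
    nlinarith [abs_mul_abs_self A, abs_nonneg A, le_abs_self A, neg_abs_le A, h1.1, h1.2]
  -- positive side
  obtain ⟨ξ, hξ, hτ⟩ := myTaylorPt hh hv hδ0
  have hpos1 : 0 < deriv g δ * A := by
    have heq : deriv g δ * A = (D ξ * A) * (δ ^ (m + 1) / Nat.factorial (m + 1)) := by
      rw [hτ]; ring
    rw [heq]
    have hkey := key ξ (by rw [abs_of_pos hξ.1]; exact lt_trans hξ.2 hδr)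
    have hfac : (0 : ℝ) < Nat.factorial (m + 1) := by positivity
    exact mul_pos hkey (by positivity)
  -- negative side
  have hh2 : ContDiff ℝ ((m + 1 : ℕ)) (fun y => deriv g (-y)) := hh.comp contDiff_neg
  have hv2 : ∀ k ≤ m, iteratedDeriv k (fun y => deriv g (-y)) 0 = 0 := by
    intro k hk
    rw [iteratedDeriv_comp_neg, neg_zero, hv k hk, smul_zero]
  obtain ⟨ξ', hξ', hτ2⟩ := myTaylorPt hh2 hv2 hδ0
  have hpos2 : 0 < deriv g (-δ) * A := by
    have he : iteratedDeriv (m + 1) (fun y => deriv g (-y)) ξ' = D (-ξ') := by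
      rw [iteratedDeriv_comp_neg]
      have heven : Even (m + 1) := ⟨j + 1, by omega⟩
      rw [heven.neg_one_pow, one_smul]
    have heq : deriv g (-δ) * A = (D (-ξ') * A) * (δ ^ (m + 1) / Nat.factorial (m + 1)) := by
      have : deriv g (-δ) = iteratedDeriv (m + 1) (fun y => deriv g (-y)) ξ'
          * δ ^ (m + 1) / Nat.factorial (m + 1) := hτ2
      rw [this, he]; ring
    rw [heq]
    have hkey := key (-ξ') (by rw [abs_neg, abs_of_pos hξ'.1]; exact lt_trans hξ'.2 hδr)
    exact mul_pos hkey (by positivity)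
  set M := min (deriv g δ * A) (deriv g (-δ) * A) with hMdef
  have hM : 0 < M := lt_min hpos1 hpos2
  refine ⟨δ, ⟨hδ0, hδ1⟩, M / (2 * |A|), by positivity, ?_⟩
  intro p hp hpb
  set F := fun y => (deriv g y + p y) * A with hFdef
  have hFc : Continuous F := (hh.continuous.add hp).mul continuous_const
  have hd0 : deriv g 0 = 0 := by
    have := hv 0 (Nat.zero_le _); rwa [iteratedDeriv_zero] at this
  have hF0 : F 0 < 0 := by
    have := (hpb 0 (by constructor <;> norm_num)).2
    simp only [hFdef, hd0, zero_add]
    exact this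
  have hbound : ∀ y : ℝ, y ∈ Icc (-1 : ℝ) 1 → p y * A ≥ -(M / 2) := by
    intro y hy
    have h1 := (hpb y hy).1
    have h2 : |p y * A| ≤ M / 2 := by
      rw [abs_mul]
      calc |p y| * |A| ≤ M / (2 * |A|) * |A| := by
            exact mul_le_mul_of_nonneg_right h1 (abs_nonneg A)
        _ = M / 2 := by field_simp
    linarith [neg_abs_le (p y * A), neg_le_neg h2]
  have hδmem : δ ∈ Icc (-1 : ℝ) 1 := ⟨by linarith, hδ1.le⟩
  have hδmem' : -δ ∈ Icc (-1 : ℝ) 1 := ⟨by linarith, by linarith⟩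
  have hFδ : 0 < F δ := by
    have := hbound δ hδmem
    have hMle : M ≤ deriv g δ * A := min_le_left _ _
    have : F δ = deriv g δ * A + p δ * A := by rw [hFdef]; ring
    linarith [hbound δ hδmem]
  have hFnδ : 0 < F (-δ) := by
    have hMle : M ≤ deriv g (-δ) * A := min_le_right _ _
    have : F (-δ) = deriv g (-δ) * A + p (-δ) * A := by rw [hFdef]; ring
    linarith [hbound (-δ) hδmem']
  constructor
  · have hiv := intermediate_value_Ioo' (a := -δ) (b := 0) (by linarith) hFc.continuousOn
    obtain ⟨y₁, hy₁, hFy₁⟩ := hiv ⟨hF0, hFnδ⟩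
    exact ⟨y₁, hy₁, (mul_eq_zero.mp hFy₁).resolve_right hA⟩
  · have hiv := intermediate_value_Ioo (a := 0) (b := δ) hδ0.le hFc.continuousOn
    obtain ⟨y₂, hy₂, hFy₂⟩ := hiv ⟨hF0, hFδ⟩
    exact ⟨y₂, hy₂, (mul_eq_zero.mp hFy₂).resolve_right hA⟩
end

section
/- Let ℓ ≥ 1 be an integer and let g : ℝ → ℝ be (2ℓ+1)-times continuously differentiable with iteratedDeriv k g 0 = 0 for every k with 1 ≤ k ≤ 2ℓ, and A := iteratedDeriv (2ℓ+1) g 0 ≠ 0. Then there exists δ ∈ (0,1) such that for every function p : ℝ → ℝ satisfying p(y)·A > 0 for all y ∈ (−δ,δ), there is no y ∈ (−δ,δ) with deriv g y + p(y) = 0. -/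
open Set

lemma myIDW {n N : ℕ} {f : ℝ → ℝ} {s : Set ℝ} {x : ℝ} (hf : ContDiff ℝ (N : ℕ∞) f)
    (hn : n ≤ N) (hs : UniqueDiffOn ℝ s) (hx : x ∈ s) :
    iteratedDerivWithin n f s x = iteratedDeriv n f x := by
  rw [iteratedDerivWithin_eq_iteratedFDerivWithin, iteratedDeriv_eq_iteratedFDeriv]
  congr 1
  exact (((contDiff_iff_ftaylorSeries.mp hf).hasFTaylorSeriesUpToOn s
    ).eq_iteratedFDerivWithin_of_uniqueDiffOn (by exact_mod_cast hn) hs hx).symm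

lemma myKey {n : ℕ} (hn : 1 ≤ n) (f : ℝ → ℝ) (hf : ContDiff ℝ ((2 * n : ℕ) : ℕ∞) f)
    (h0 : ∀ k < 2 * n, iteratedDeriv k f 0 = 0) {A δ : ℝ}
    (hpos : ∀ z ∈ Ioo (0 : ℝ) δ, iteratedDeriv (2 * n) f z * A > 0) :
    ∀ y ∈ Ioo (0 : ℝ) δ, f y * A > 0 := by
  intro y hy
  obtain ⟨m, hm⟩ : ∃ m, 2 * n = m + 1 := ⟨2 * n - 1, by omega⟩
  have hud : UniqueDiffOn ℝ (Icc (0 : ℝ) y) := uniqueDiffOn_Icc hy.1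
  have hdiff : DifferentiableOn ℝ (iteratedDerivWithin m f (Icc 0 y)) (Ioo 0 y) := by
    refine ((hf.differentiable_iteratedDeriv m (by exact_mod_cast (by omega : m < 2 * n))
      ).differentiableOn).congr fun z hz => myIDW hf (by omega) hud (Ioo_subset_Icc_self hz)
  obtain ⟨ξ, hξ, heq⟩ := taylor_mean_remainder_lagrange (f := f) (n := m) hy.1.ne
    (hf.contDiffOn.of_le (by exact_mod_cast (by omega : m ≤ 2 * n)))
    (by rw [uIcc_of_le hy.1.le, uIoo_of_le hy.1.le]; exact hdiff)
  rw [uIcc_of_le hy.1.le] at heq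
  rw [uIoo_of_le hy.1.le] at hξ
  have hT : taylorWithinEval f m (Icc 0 y) 0 y = 0 := by
    rw [taylor_within_apply]
    refine Finset.sum_eq_zero fun k hk => ?_
    rw [myIDW hf (by have := Finset.mem_range.mp hk; omega) hud (left_mem_Icc.mpr hy.1.le),
      h0 k (by have := Finset.mem_range.mp hk; omega), smul_zero]
  rw [hT, sub_zero, myIDW hf (by omega) hud (Ioo_subset_Icc_self hξ), sub_zero] at heq
  have hξp : iteratedDeriv (m + 1) f ξ * A > 0 := by
    rw [← hm]; exact hpos ξ ⟨hξ.1, hξ.2.trans hy.2⟩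
  rw [heq]
  have hy' : (0 : ℝ) < y ^ (m + 1) := pow_pos hy.1 _
  have hfac : (0 : ℝ) < ((m + 1).factorial : ℝ) := by positivity
  calc (0:ℝ) < (iteratedDeriv (m + 1) f ξ * A) * (y ^ (m + 1) / ((m + 1).factorial : ℝ)) := by positivity
    _ = iteratedDeriv (m + 1) f ξ * y ^ (m + 1) / ((m + 1).factorial : ℝ) * A := by ring

/-- Destruction half of Theorem 2.8(1): if g is C^{2ℓ+1} with vanishing derivatives
of orders 1,…,2ℓ at 0 and A := g^{(2ℓ+1)}(0) ≠ 0, then there is δ ∈ (0,1) such that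
for any p with p·A > 0 on (−δ,δ), the equation g'(y) + p(y) = 0 has no solution
in (−δ,δ). -/
theorem stmt1 (ℓ : ℕ) (hℓ : 1 ≤ ℓ) (g : ℝ → ℝ)
    (hg : ContDiff ℝ (2 * ℓ + 1 : ℕ) g)
    (hvanish : ∀ k : ℕ, 1 ≤ k → k ≤ 2 * ℓ → iteratedDeriv k g 0 = 0)
    (hA : iteratedDeriv (2 * ℓ + 1) g 0 ≠ 0) :
    ∃ δ ∈ Ioo (0 : ℝ) 1,
      ∀ p : ℝ → ℝ,
        (∀ y ∈ Ioo (-δ) δ, p y * iteratedDeriv (2 * ℓ + 1) g 0 > 0) →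
        ¬ ∃ y ∈ Ioo (-δ) δ, deriv g y + p y = 0 := by
  set A := iteratedDeriv (2 * ℓ + 1) g 0 with hAdef
  set f := deriv g with hfdef
  have hf : ContDiff ℝ ((2 * ℓ : ℕ) : ℕ∞) f := by
    have := hg
    rw [show ((2 * ℓ + 1 : ℕ) : WithTop ℕ∞) = (((2 * ℓ : ℕ) : ℕ∞) : WithTop ℕ∞) + 1 by push_cast; ring_nf; norm_cast,
      contDiff_succ_iff_deriv] at this
    exact this.2.2
  have hfg : ∀ k : ℕ, iteratedDeriv k f 0 = iteratedDeriv (k + 1) g 0 := by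
    intro k; rw [iteratedDeriv_succ']
  have h0 : ∀ k < 2 * ℓ, iteratedDeriv k f 0 = 0 := fun k hk => by
    rw [hfg k]; exact hvanish (k + 1) (by omega) (by omega)
  have htop : iteratedDeriv (2 * ℓ) f 0 = A := by rw [hfg]
  have hcont : Continuous fun z => iteratedDeriv (2 * ℓ) f z * A :=
    (hf.continuous_iteratedDeriv (2 * ℓ) le_rfl).mul continuous_const
  have h00 : iteratedDeriv (2 * ℓ) f 0 * A ∈ Ioi (0 : ℝ) := by
    rw [htop]; exact mul_self_pos.mpr hA
  obtain ⟨ε, hε, hball⟩ := Metric.eventually_nhds_iff.mp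
    (hcont.continuousAt.eventually_mem (isOpen_Ioi.mem_nhds h00))
  set δ := min (ε / 2) (1 / 2) with hδdef
  have hδ0 : 0 < δ := lt_min (by linarith) (by norm_num)
  have hδ1 : δ < 1 := lt_of_le_of_lt (min_le_right _ _) (by norm_num)
  have hδε : δ < ε := lt_of_le_of_lt (min_le_left _ _) (by linarith)
  refine ⟨δ, ⟨hδ0, hδ1⟩, ?_⟩
  rintro p hp ⟨y, hy, heq⟩
  have hpos : ∀ z ∈ Ioo (-δ) δ, iteratedDeriv (2 * ℓ) f z * A > 0 := by
    intro z hz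
    exact hball (show dist z 0 < ε by
      rw [Real.dist_eq, sub_zero]; exact (abs_lt.mpr ⟨hz.1, hz.2⟩).trans hδε)
  have hpy : p y * A > 0 := hp y hy
  have hfy : f y * A ≥ 0 := by
    rcases lt_trichotomy y 0 with hy0 | hy0 | hy0
    · set F : ℝ → ℝ := fun t => f (-t) with hFdef
      have hF : ContDiff ℝ ((2 * ℓ : ℕ) : ℕ∞) F := hf.comp contDiff_neg
      have h0F : ∀ k < 2 * ℓ, iteratedDeriv k F 0 = 0 := by
        intro k hk
        rw [hFdef, iteratedDeriv_comp_neg, neg_zero, h0 k hk, smul_zero]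
      have hposF : ∀ z ∈ Ioo (0 : ℝ) δ, iteratedDeriv (2 * ℓ) F z * A > 0 := by
        intro z hz
        rw [hFdef, iteratedDeriv_comp_neg, smul_eq_mul, Even.neg_one_pow ⟨ℓ, by ring⟩, one_mul]
        exact hpos (-z) ⟨by linarith [hz.2], by linarith [hz.1]⟩
      have := myKey hℓ F hF h0F hposF (-y) ⟨by linarith, by linarith [hy.1]⟩
      have hFy : F (-y) = f y := by rw [hFdef]; simp
      rw [hFy] at this
      exact this.le
    · rw [hfdef] at *
      have : deriv g y = 0 := by rw [hy0]; exact h0 0 (by omega)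
      rw [this, zero_mul]
    · exact (myKey hℓ f hf h0 (fun z hz => hpos z ⟨by linarith [hz.1], hz.2⟩) y
        ⟨hy0, hy.2⟩).le
  have : (f y + p y) * A = 0 := by rw [heq, zero_mul]
  nlinarith
end

section
/- For every dimension n ≥ 1 and every positive integer l there exists σ > 0 such that for all x, y ∈ ℝⁿ (with the Euclidean norm), ‖ ‖x‖^{2l}·x − ‖y‖^{2l}·y ‖ ≥ σ·‖x − y‖^{2l+1}. -/
open RealInnerProductSpace

/-- Verification of the weak convexity condition (A1) for Φ(y) = ‖y‖^{2l} y on ℝⁿ: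
there exists σ > 0 with ‖ ‖x‖^{2l} x − ‖y‖^{2l} y ‖ ≥ σ ‖x − y‖^{2l+1}. -/
theorem stmt4 (n : ℕ) (hn : 1 ≤ n) (l : ℕ) (hl : 1 ≤ l) :
    ∃ σ > (0 : ℝ), ∀ x y : EuclideanSpace ℝ (Fin n),
      ‖(‖x‖ ^ (2 * l)) • x - (‖y‖ ^ (2 * l)) • y‖ ≥ σ * ‖x - y‖ ^ (2 * l + 1) := by
  set m := 2 * l with hm
  refine ⟨(1/2 : ℝ) ^ (m + 1), by positivity, fun x y => ?_⟩
  set a := ‖x‖ with ha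
  set b := ‖y‖ with hb
  have ha0 : 0 ≤ a := norm_nonneg x
  have hb0 : 0 ≤ b := norm_nonneg y
  have hd0 : 0 ≤ ‖x - y‖ := norm_nonneg _
  rcases eq_or_lt_of_le hd0 with hd | hd
  · rw [← hd]
    simp [norm_nonneg]
  · -- inner product identity
    have key1 : ⟪(a ^ m) • x - (b ^ m) • y, x - y⟫ =
        a ^ m * a ^ 2 + b ^ m * b ^ 2 - (a ^ m + b ^ m) * ⟪x, y⟫ := by
      rw [inner_sub_left, inner_sub_right, inner_sub_right, real_inner_smul_left,
        real_inner_smul_left, real_inner_smul_left, real_inner_smul_left,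
        real_inner_self_eq_norm_sq, real_inner_self_eq_norm_sq, real_inner_comm y x]
      ring
    have key2 : ‖x - y‖ ^ 2 = a ^ 2 - 2 * ⟪x, y⟫ + b ^ 2 := by
      rw [norm_sub_sq_real]
    have hmono : (a ^ m - b ^ m) * (a ^ 2 - b ^ 2) ≥ 0 := by
      rcases le_total a b with h | h
      · have h1 : a ^ m ≤ b ^ m := pow_le_pow_left₀ ha0 h m
        have h2 : a ^ 2 ≤ b ^ 2 := pow_le_pow_left₀ ha0 h 2
        nlinarith [mul_nonneg (sub_nonneg.2 h1) (sub_nonneg.2 h2)]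
      · have h1 : b ^ m ≤ a ^ m := pow_le_pow_left₀ hb0 h m
        have h2 : b ^ 2 ≤ a ^ 2 := pow_le_pow_left₀ hb0 h 2
        exact mul_nonneg (by linarith) (by linarith)
    have hlow : ⟪(a ^ m) • x - (b ^ m) • y, x - y⟫ ≥
        (1/2 : ℝ) * (a ^ m + b ^ m) * ‖x - y‖ ^ 2 := by
      rw [key1, key2]; nlinarith [hmono]
    -- a^m + b^m ≥ (‖x-y‖/2)^m
    have htri : ‖x - y‖ ≤ a + b := norm_sub_le x y
    have hsum : (‖x - y‖ / 2) ^ m ≤ a ^ m + b ^ m := by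
      rcases le_total a b with h | h
      · have h1 : ‖x - y‖ / 2 ≤ b := by linarith
        calc (‖x - y‖ / 2) ^ m ≤ b ^ m := pow_le_pow_left₀ (by linarith) h1 m
          _ ≤ a ^ m + b ^ m := by nlinarith [pow_nonneg ha0 m]
      · have h1 : ‖x - y‖ / 2 ≤ a := by linarith
        calc (‖x - y‖ / 2) ^ m ≤ a ^ m := pow_le_pow_left₀ (by linarith) h1 m
          _ ≤ a ^ m + b ^ m := by nlinarith [pow_nonneg hb0 m]
    have hcs : ⟪(a ^ m) • x - (b ^ m) • y, x - y⟫ ≤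
        ‖(a ^ m) • x - (b ^ m) • y‖ * ‖x - y‖ := real_inner_le_norm _ _
    have hmain : ‖(a ^ m) • x - (b ^ m) • y‖ * ‖x - y‖ ≥
        (1/2 : ℝ) ^ (m + 1) * ‖x - y‖ ^ (m + 2) := by
      have : (1/2 : ℝ) ^ (m + 1) * ‖x - y‖ ^ (m + 2) =
          (1/2 : ℝ) * (‖x - y‖ / 2) ^ m * ‖x - y‖ ^ 2 := by
        simp only [div_pow, one_pow]; ring
      rw [this]
      have h2 : (1/2 : ℝ) * (‖x - y‖ / 2) ^ m * ‖x - y‖ ^ 2 ≤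
          (1/2 : ℝ) * (a ^ m + b ^ m) * ‖x - y‖ ^ 2 := by
        have := sq_nonneg ‖x - y‖
        nlinarith [hsum]
      linarith [hlow, hcs]
    have hpow : ‖x - y‖ ^ (m + 2) = ‖x - y‖ ^ (m + 1) * ‖x - y‖ := by ring
    rw [ge_iff_le, ← mul_le_mul_iff_of_pos_right hd]
    calc (1/2 : ℝ) ^ (m + 1) * ‖x - y‖ ^ (m + 1) * ‖x - y‖
        = (1/2 : ℝ) ^ (m + 1) * ‖x - y‖ ^ (m + 2) := by rw [hpow]; ring
      _ ≤ ‖(a ^ m) • x - (b ^ m) • y‖ * ‖x - y‖ := hmain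
end

section
/- Fix ω̄₂ ∈ ℝ and define ω₂ : ℝ → ℝ by ω₂(t) = ω̄₂ + exp(−1/(t+1/2)²) for t ∈ (−1,−1/2), ω₂(t) = ω̄₂ for t ∈ [−1/2,1/2], and ω₂(t) = ω̄₂ − exp(−1/(t−1/2)²) for t ∈ (1/2,1). Then for every t with 0 < t < exp(−4): (i) there exists ξ₂ ∈ (1/2,1) with ω₂(ξ₂) = ω̄₂ − t, and every ξ₂ ∈ (−1,1) with ω₂(ξ₂) = ω̄₂ − t lies in (1/2,1); (ii) there exists ξ₂ ∈ (−1,−1/2) with ω₂(ξ₂) = ω̄₂ + t, and every ξ₂ ∈ (−1,1) with ω₂(ξ₂) = ω̄₂ + t lies in (−1,−1/2). -/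
open Set

lemma aux_s (t : ℝ) (ht : 0 < t) (ht4 : t < Real.exp (-4)) :
    ∃ s : ℝ, 0 < s ∧ s < 1/2 ∧ Real.exp (-1 / s ^ 2) = t := by
  have hL : Real.log t < -4 := by
    have := Real.log_lt_log ht ht4
    rwa [Real.log_exp] at this
  set L := Real.log t with hLdef
  have hnegL : (4:ℝ) < -L := by linarith
  have hpos : (0:ℝ) < 1 / (-L) := by positivity
  refine ⟨Real.sqrt (1 / (-L)), Real.sqrt_pos.mpr hpos, ?_, ?_⟩
  · have h14 : (1:ℝ) / (-L) < 1/4 := by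
      rw [div_lt_div_iff₀ (by linarith) (by norm_num)]
      linarith
    have := Real.sqrt_lt_sqrt (le_of_lt hpos) h14
    have h2 : Real.sqrt (1/4) = 1/2 := by
      rw [show (1:ℝ)/4 = (1/2)^2 by norm_num, Real.sqrt_sq (by norm_num)]
    linarith [this, h2.le, h2.ge]
  · have hsq : Real.sqrt (1 / (-L)) ^ 2 = 1 / (-L) := Real.sq_sqrt hpos.le
    rw [hsq]
    have : -1 / (1 / (-L)) = L := by
      field_simp
    rw [this, hLdef, Real.exp_log ht]

/-- Localization of solutions of the frequency equation in Appendix A: for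
0 < t < e^{−4}, the equation ω₂(ξ₂) = ωbar₂ − t is solvable in (1/2,1) and all its
solutions in (−1,1) lie there, and symmetrically ω₂(ξ₂) = ωbar₂ + t is solvable in
(−1,−1/2) and all its solutions in (−1,1) lie there. -/
theorem stmt9 (ωbar₂ : ℝ) (ω₂ : ℝ → ℝ)
    (h₁ : ∀ t ∈ Ioo (-1 : ℝ) (-1/2), ω₂ t = ωbar₂ + Real.exp (-1 / (t + 1/2) ^ 2))
    (h₂ : ∀ t ∈ Icc (-1/2 : ℝ) (1/2), ω₂ t = ωbar₂)
    (h₃ : ∀ t ∈ Ioo (1/2 : ℝ) 1, ω₂ t = ωbar₂ - Real.exp (-1 / (t - 1/2) ^ 2)) :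
    ∀ t : ℝ, 0 < t → t < Real.exp (-4) →
      ((∃ ξ₂ ∈ Ioo (1/2 : ℝ) 1, ω₂ ξ₂ = ωbar₂ - t) ∧
        (∀ ξ₂ ∈ Ioo (-1 : ℝ) 1, ω₂ ξ₂ = ωbar₂ - t → ξ₂ ∈ Ioo (1/2 : ℝ) 1)) ∧
      ((∃ ξ₂ ∈ Ioo (-1 : ℝ) (-1/2), ω₂ ξ₂ = ωbar₂ + t) ∧
        (∀ ξ₂ ∈ Ioo (-1 : ℝ) 1, ω₂ ξ₂ = ωbar₂ + t → ξ₂ ∈ Ioo (-1 : ℝ) (-1/2))) := by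
  intro t ht ht4
  obtain ⟨s, hs0, hs2, hse⟩ := aux_s t ht ht4
  constructor
  · constructor
    · refine ⟨1/2 + s, ⟨by linarith, by linarith⟩, ?_⟩
      rw [h₃ _ ⟨by linarith, by linarith⟩]
      have : (1/2 + s - 1/2) = s := by ring
      rw [this, hse]
    · rintro ξ ⟨hξ1, hξ2⟩ heq
      by_contra hne
      rcases lt_or_ge ξ (-1/2) with hc | hc
      · rw [h₁ ξ ⟨hξ1, hc⟩] at heq
        have := Real.exp_pos (-1 / (ξ + 1/2) ^ 2)
        linarith
      · rcases le_or_gt ξ (1/2) with hc2 | hc2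
        · rw [h₂ ξ ⟨hc, hc2⟩] at heq
          linarith
        · exact hne ⟨hc2, hξ2⟩
  · constructor
    · refine ⟨-1/2 - s, ⟨by linarith, by linarith⟩, ?_⟩
      rw [h₁ _ ⟨by linarith, by linarith⟩]
      have : (-1/2 - s + 1/2) ^ 2 = s ^ 2 := by ring
      rw [this, hse]
    · rintro ξ ⟨hξ1, hξ2⟩ heq
      by_contra hne
      rcases lt_or_ge ξ (-1/2) with hc | hc
      · exact hne ⟨hξ1, hc⟩
      · rcases le_or_gt ξ (1/2) with hc2 | hc2
        · rw [h₂ ξ ⟨hc, hc2⟩] at heq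
          linarith
        · rw [h₃ ξ ⟨hc2, hξ2⟩] at heq
          have := Real.exp_pos (-1 / (ξ - 1/2) ^ 2)
          linarith
end

section
/- Fix ω̄₂ ∈ ℝ, a positive integer ℓ, define ω₂ : ℝ → ℝ by ω₂(t) = ω̄₂ + exp(−1/(t+1/2)²) for t ∈ (−1,−1/2), ω₂(t) = ω̄₂ for t ∈ [−1/2,1/2], and ω₂(t) = ω̄₂ − exp(−1/(t−1/2)²) for t ∈ (1/2,1), and define P₀ : ℝ → ℝ by P₀(ε) = ε^ℓ·sin(1/ε) for ε ≠ 0 and P₀(0) = 0. Then for every δ > 0 and every function x : ℝ → ℝ such that x(ε) ∈ (−1,1) and ω₂(x(ε)) = ω̄₂ − P₀(ε) for all ε ∈ (0,δ), there is no real number ℓ* such that x(ε) tends to ℓ* as ε tends to 0 from the right. -/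
open Set Filter Topology

lemma aux_tendsto (c : ℝ) (hc : 0 < c) :
    Tendsto (fun n : ℕ => (c + n * (2 * Real.pi))⁻¹) atTop (𝓝[>] (0:ℝ)) := by
  have hpi := Real.pi_pos
  have h1 : Tendsto (fun n : ℕ => c + n * (2 * Real.pi)) atTop atTop := by
    apply tendsto_atTop_add_const_left
    exact Tendsto.atTop_mul_const (by positivity) tendsto_natCast_atTop_atTop
  apply tendsto_nhdsWithin_of_tendsto_nhds_of_eventually_within
  · exact h1.inv_tendsto_atTop
  · filter_upwards with n
    have : 0 < c + n * (2 * Real.pi) := by positivity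
    exact inv_pos.mpr this

/-- Concluding claim of Proposition 2.2 (Appendix A): any frequency-preserving
parameter choice ε ↦ x(ε) with ω₂(x(ε)) = ωbar₂ − P₀(ε), where
P₀(ε) = ε^ℓ sin(1/ε), has no limit as ε → 0⁺. -/
theorem stmt10 (ωbar₂ : ℝ) (ℓ : ℕ) (hℓ : 1 ≤ ℓ) (ω₂ : ℝ → ℝ)
    (h₁ : ∀ t ∈ Ioo (-1 : ℝ) (-1/2), ω₂ t = ωbar₂ + Real.exp (-1 / (t + 1/2) ^ 2))
    (h₂ : ∀ t ∈ Icc (-1/2 : ℝ) (1/2), ω₂ t = ωbar₂)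
    (h₃ : ∀ t ∈ Ioo (1/2 : ℝ) 1, ω₂ t = ωbar₂ - Real.exp (-1 / (t - 1/2) ^ 2))
    (P₀ : ℝ → ℝ) (hP₀ : ∀ ε : ℝ, ε ≠ 0 → P₀ ε = ε ^ ℓ * Real.sin (1 / ε))
    (hP₀0 : P₀ 0 = 0) :
    ∀ δ > (0 : ℝ), ∀ x : ℝ → ℝ,
      (∀ ε ∈ Ioo (0 : ℝ) δ, x ε ∈ Ioo (-1 : ℝ) 1 ∧ ω₂ (x ε) = ωbar₂ - P₀ ε) →
      ¬ ∃ lstar : ℝ, Tendsto x (𝓝[>] (0 : ℝ)) (𝓝 lstar) := by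
  intro δ hδ x hx
  rintro ⟨l, hl⟩
  have hpi := Real.pi_pos
  -- If P₀ ε > 0 then x ε > 1/2
  have key_pos : ∀ ε ∈ Ioo (0:ℝ) δ, 0 < P₀ ε → 1/2 < x ε := by
    intro ε hε hpos
    obtain ⟨hx1, hx2⟩ := hx ε hε
    by_contra hle
    push_neg at hle
    rcases lt_or_ge (x ε) (-1/2) with hlt | hge
    · have := h₁ (x ε) ⟨hx1.1, hlt⟩
      rw [this] at hx2
      have := Real.exp_pos (-1 / (x ε + 1/2) ^ 2)
      linarith
    · have := h₂ (x ε) ⟨hge, hle⟩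
      rw [this] at hx2
      linarith
  have key_neg : ∀ ε ∈ Ioo (0:ℝ) δ, P₀ ε < 0 → x ε < -1/2 := by
    intro ε hε hneg
    obtain ⟨hx1, hx2⟩ := hx ε hε
    by_contra hle
    push_neg at hle
    rcases lt_or_ge (1/2 : ℝ) (x ε) with hlt | hge
    · have := h₃ (x ε) ⟨hlt, hx1.2⟩
      rw [this] at hx2
      have := Real.exp_pos (-1 / (x ε - 1/2) ^ 2)
      linarith
    · have := h₂ (x ε) ⟨hle, hge⟩
      rw [this] at hx2
      linarith
  -- sequences
  set a : ℕ → ℝ := fun n => (Real.pi/2 + n * (2 * Real.pi))⁻¹ with ha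
  set b : ℕ → ℝ := fun n => (3*Real.pi/2 + n * (2 * Real.pi))⁻¹ with hb
  have hta : Tendsto a atTop (𝓝[>] (0:ℝ)) := aux_tendsto _ (by positivity)
  have htb : Tendsto b atTop (𝓝[>] (0:ℝ)) := aux_tendsto _ (by positivity)
  have haδ : ∀ᶠ n in atTop, a n ∈ Ioo (0:ℝ) δ := by
    have h0 : ∀ᶠ n in atTop, a n ∈ Ioi (0:ℝ) :=
      hta.eventually_mem self_mem_nhdsWithin
    have h1 : ∀ᶠ n in atTop, a n < δ :=
      (hta.mono_right nhdsWithin_le_nhds).eventually (eventually_lt_nhds hδ)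
    filter_upwards [h0, h1] with n h0 h1 using ⟨h0, h1⟩
  have hbδ : ∀ᶠ n in atTop, b n ∈ Ioo (0:ℝ) δ := by
    have h0 : ∀ᶠ n in atTop, b n ∈ Ioi (0:ℝ) :=
      htb.eventually_mem self_mem_nhdsWithin
    have h1 : ∀ᶠ n in atTop, b n < δ :=
      (htb.mono_right nhdsWithin_le_nhds).eventually (eventually_lt_nhds hδ)
    filter_upwards [h0, h1] with n h0 h1 using ⟨h0, h1⟩
  -- P₀ positive along a, negative along b
  have hPa : ∀ n : ℕ, 0 < P₀ (a n) := by
    intro n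
    have hapos : 0 < Real.pi/2 + n * (2 * Real.pi) := by positivity
    have hane : a n ≠ 0 := by simpa [ha] using (inv_pos.mpr hapos).ne'
    rw [hP₀ _ hane]
    have hsin : Real.sin (1 / a n) = 1 := by
      simp only [ha, one_div, inv_inv]
      rw [Real.sin_add_nat_mul_two_pi, Real.sin_pi_div_two]
    rw [hsin, mul_one]
    exact pow_pos (inv_pos.mpr hapos) ℓ
  have hPb : ∀ n : ℕ, P₀ (b n) < 0 := by
    intro n
    have hbpos : 0 < 3*Real.pi/2 + n * (2 * Real.pi) := by positivity
    have hbne : b n ≠ 0 := by simpa [hb] using (inv_pos.mpr hbpos).ne'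
    rw [hP₀ _ hbne]
    have hsin : Real.sin (1 / b n) = -1 := by
      simp only [hb, one_div, inv_inv]
      have : 3*Real.pi/2 + n * (2 * Real.pi) = -(Real.pi/2) + (n+1) * (2*Real.pi) := by
        ring
      rw [this]
      have := Real.sin_add_nat_mul_two_pi (-(Real.pi/2)) (n+1)
      push_cast at this ⊢
      rw [this, Real.sin_neg, Real.sin_pi_div_two]
    rw [hsin]
    have : 0 < (b n) ^ ℓ := pow_pos (inv_pos.mpr hbpos) ℓ
    nlinarith
  -- limits along subsequences
  have hla : Tendsto (fun n => x (a n)) atTop (𝓝 l) := hl.comp hta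
  have hlb : Tendsto (fun n => x (b n)) atTop (𝓝 l) := hl.comp htb
  have hge : (1:ℝ)/2 ≤ l := by
    apply ge_of_tendsto hla
    filter_upwards [haδ] with n hn
    exact le_of_lt (key_pos _ hn (hPa n))
  have hle : l ≤ -1/2 := by
    apply le_of_tendsto hlb
    filter_upwards [hbδ] with n hn
    exact le_of_lt (key_neg _ hn (hPb n))
  linarith
end

section
/- Let n, m, η be positive integers, let τ > 0 be real, let s ∈ (0,1], M ≥ 0, B ≥ 0, and let ε ∈ (0,1) satisfy ε^{1/8 − 1/(8η(τ+1)(m+1))}·B·16^m·(M+2)^m ≤ s^m. Define μ₀ = ε^{1/(8η(τ+1)(m+1))}, γ₀ = ε^{1/(4(n+m+2))}, K₁ = (⌊log(1/μ₀)⌋ + 1)^{3η} (natural-number floor of the natural logarithm), and s₀ = s·γ₀ / (16·(M+2)·K₁^{τ+1}). Then ε·B ≤ γ₀^{n+m+2}·s₀^m·μ₀. -/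
/-- Lemma 3.1 in arithmetic form: with the 0-th step KAM parameters
μ₀ = ε^{1/(8η(τ+1)(m+1))}, γ₀ = ε^{1/(4(n+m+2))}, K₁ = (⌊log(1/μ₀)⌋+1)^{3η},
s₀ = sγ₀/(16(M+2)K₁^{τ+1}), the smallness condition on ε yields
ε·B ≤ γ₀^{n+m+2} s₀^m μ₀. -/
theorem stmt13 (n m η : ℕ) (hn : 1 ≤ n) (hm : 1 ≤ m) (hη : 1 ≤ η)
    (τ : ℝ) (hτ : 0 < τ) (s : ℝ) (hs : s ∈ Set.Ioc (0 : ℝ) 1)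
    (M B : ℝ) (hM : 0 ≤ M) (hB : 0 ≤ B) (ε : ℝ) (hε : ε ∈ Set.Ioo (0 : ℝ) 1)
    (μ₀ γ₀ s₀ : ℝ) (K₁ : ℕ)
    (hμ₀ : μ₀ = ε ^ ((1 : ℝ) / (8 * (η : ℝ) * (τ + 1) * ((m : ℝ) + 1))))
    (hγ₀ : γ₀ = ε ^ ((1 : ℝ) / (4 * ((n : ℝ) + (m : ℝ) + 2))))
    (hK₁ : K₁ = (⌊Real.log (1 / μ₀)⌋₊ + 1) ^ (3 * η))
    (hs₀ : s₀ = s * γ₀ / (16 * (M + 2) * (K₁ : ℝ) ^ (τ + 1)))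
    (hsmall : ε ^ ((1 : ℝ) / 8 - 1 / (8 * (η : ℝ) * (τ + 1) * ((m : ℝ) + 1)))
        * B * 16 ^ m * (M + 2) ^ m ≤ s ^ m) :
    ε * B ≤ γ₀ ^ (n + m + 2) * s₀ ^ m * μ₀ := by
  obtain ⟨hs0, hs1⟩ := hs
  obtain ⟨hε0, hε1⟩ := hε
  have hε0' : (0:ℝ) ≤ ε := hε0.le
  have hη1 : (1:ℝ) ≤ η := by exact_mod_cast hη
  have hm1 : (1:ℝ) ≤ m := by exact_mod_cast hm
  have hτ1 : (0:ℝ) < τ + 1 := by linarith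
  have hden : (0:ℝ) < 8 * (η:ℝ) * (τ + 1) * ((m:ℝ) + 1) :=
    mul_pos (mul_pos (mul_pos (by norm_num) (by linarith)) hτ1) (by linarith)
  set a : ℝ := 1 / (8 * (η:ℝ) * (τ + 1) * ((m:ℝ) + 1)) with ha
  have ha0 : 0 < a := one_div_pos.mpr hden
  have hμ' : μ₀ = ε ^ a := hμ₀
  have hμpos : 0 < μ₀ := by rw [hμ']; exact Real.rpow_pos_of_pos hε0 _
  have hμle1 : μ₀ ≤ 1 := by rw [hμ']; exact Real.rpow_le_one hε0' hε1.le ha0.le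
  -- γ₀ facts
  have hγpos : 0 < γ₀ := by rw [hγ₀]; exact Real.rpow_pos_of_pos hε0 _
  have hnm : (0:ℝ) < (n:ℝ) + m + 2 := by positivity
  have hγpow : γ₀ ^ (n + m + 2) = ε ^ ((1:ℝ)/4) := by
    rw [hγ₀, ← Real.rpow_natCast _ (n+m+2), ← Real.rpow_mul hε0']
    congr 1
    push_cast
    field_simp
  have hγm : ε ^ ((1:ℝ)/4) ≤ γ₀ ^ m := by
    rw [hγ₀, ← Real.rpow_natCast _ m, ← Real.rpow_mul hε0']
    apply Real.rpow_le_rpow_of_exponent_ge hε0 hε1.le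
    rw [div_mul_eq_mul_div, one_mul, div_le_div_iff₀ (by positivity) (by norm_num)]
    nlinarith
  -- K₁ bound
  have hKpos : (0:ℝ) < (K₁:ℝ) := by
    have : 0 < K₁ := by rw [hK₁]; positivity
    exact_mod_cast this
  have hμinv : (1:ℝ) ≤ 1/μ₀ := by rw [le_div_iff₀ hμpos]; linarith
  have hflr : (⌊Real.log (1/μ₀)⌋₊ : ℝ) + 1 ≤ 1/μ₀ := by
    have h1 := Nat.floor_le (Real.log_nonneg hμinv)
    have h2 := Real.log_le_sub_one_of_pos (show (0:ℝ) < 1/μ₀ by positivity)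
    linarith
  have hKle : (K₁:ℝ) ≤ ε ^ (-(a * (3*η))) := by
    have e1 : (K₁:ℝ) = ((⌊Real.log (1/μ₀)⌋₊ : ℝ) + 1) ^ (3*η) := by
      rw [hK₁]; push_cast; ring
    have e2 : ((⌊Real.log (1/μ₀)⌋₊ : ℝ) + 1) ^ (3*η) ≤ (1/μ₀) ^ (3*η) :=
      pow_le_pow_left₀ (by positivity) hflr _
    have e3 : (1/μ₀) ^ (3*η) = ε ^ (-(a * (3*η))) := by
      rw [hμ', one_div, ← Real.rpow_neg hε0', ← Real.rpow_natCast _ (3*η),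
        ← Real.rpow_mul hε0']
      congr 1
      push_cast; ring
    rw [e1, ← e3]
    exact e2
  have hKτ : (K₁:ℝ) ^ (τ+1) ≤ ε ^ (-(a * (3*η)) * (τ+1)) := by
    rw [Real.rpow_mul hε0']
    exact Real.rpow_le_rpow hKpos.le hKle hτ1.le
  have hKm : ((K₁:ℝ) ^ (τ+1)) ^ m ≤ ε ^ (-(3:ℝ)/8) := by
    calc ((K₁:ℝ) ^ (τ+1)) ^ m ≤ (ε ^ (-(a * (3*η)) * (τ+1))) ^ m :=
          pow_le_pow_left₀ (Real.rpow_nonneg hKpos.le _) hKτ m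
      _ = ε ^ (-(a * (3*η)) * (τ+1) * m) := by
          rw [← Real.rpow_natCast _ m, ← Real.rpow_mul hε0']
      _ ≤ ε ^ (-(3:ℝ)/8) := by
          apply Real.rpow_le_rpow_of_exponent_ge hε0 hε1.le
          have key : a * (3*(η:ℝ)) * (τ+1) * m ≤ 3/8 := by
            rw [ha, div_mul_eq_mul_div, div_mul_eq_mul_div, div_mul_eq_mul_div, one_mul,
              div_le_div_iff₀ hden (by norm_num)]
            nlinarith
          linarith [key]
  -- main estimate
  have hM2 : (0:ℝ) < M + 2 := by linarith
  have hE : (0:ℝ) < (16 * (M+2)) ^ m := by positivity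
  have hKK : (0:ℝ) < ((K₁:ℝ) ^ (τ+1)) ^ m := by positivity
  have hsmall' : ε ^ ((1:ℝ)/8 - a) * B * (16*(M+2)) ^ m ≤ s ^ m := by
    rw [mul_pow]
    calc ε ^ ((1:ℝ)/8 - a) * B * (16 ^ m * (M+2) ^ m)
        = ε ^ ((1:ℝ)/8 - a) * B * 16 ^ m * (M+2) ^ m := by ring
      _ ≤ s ^ m := hsmall
  have hs₀m : s₀ ^ m = s ^ m * γ₀ ^ m / ((16*(M+2)) ^ m * ((K₁:ℝ) ^ (τ+1)) ^ m) := by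
    rw [hs₀, div_pow, mul_pow, mul_pow]
  rw [hγpow, hs₀m, hμ']
  have hrw : ε ^ ((1:ℝ)/4) * (s ^ m * γ₀ ^ m / ((16*(M+2)) ^ m * ((K₁:ℝ) ^ (τ+1)) ^ m)) * ε ^ a
      = ε ^ ((1:ℝ)/4) * s ^ m * γ₀ ^ m * ε ^ a / ((16*(M+2)) ^ m * ((K₁:ℝ) ^ (τ+1)) ^ m) := by
    ring
  rw [hrw, le_div_iff₀ (by positivity)]
  have hprod : ε ^ ((1:ℝ)/4) * ε ^ ((1:ℝ)/8 - a) * ε ^ ((1:ℝ)/4) * ε ^ a = ε ^ ((5:ℝ)/8) := by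
    rw [← Real.rpow_add hε0, ← Real.rpow_add hε0, ← Real.rpow_add hε0]
    congr 1; ring
  have hmid : ε ^ ((5:ℝ)/8) * (B * (16*(M+2)) ^ m)
      ≤ ε ^ ((1:ℝ)/4) * s ^ m * γ₀ ^ m * ε ^ a := by
    calc ε ^ ((5:ℝ)/8) * (B * (16*(M+2)) ^ m)
        = ε ^ ((1:ℝ)/4) * (ε ^ ((1:ℝ)/8 - a) * B * (16*(M+2)) ^ m) * (ε ^ ((1:ℝ)/4)) * ε ^ a := by
          rw [← hprod]; ring
      _ ≤ ε ^ ((1:ℝ)/4) * s ^ m * (ε ^ ((1:ℝ)/4)) * ε ^ a := by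
          gcongr
      _ ≤ ε ^ ((1:ℝ)/4) * s ^ m * γ₀ ^ m * ε ^ a := by
          gcongr
  have hlhs : ε * B * ((16*(M+2)) ^ m * ((K₁:ℝ) ^ (τ+1)) ^ m)
      ≤ ε ^ ((5:ℝ)/8) * (B * (16*(M+2)) ^ m) := by
    have h58 : ε * ε ^ (-(3:ℝ)/8) = ε ^ ((5:ℝ)/8) := by
      nth_rewrite 1 [← Real.rpow_one ε]
      rw [← Real.rpow_add hε0]; congr 1; ring
    calc ε * B * ((16*(M+2)) ^ m * ((K₁:ℝ) ^ (τ+1)) ^ m)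
        ≤ ε * B * ((16*(M+2)) ^ m * ε ^ (-(3:ℝ)/8)) := by gcongr
      _ = (ε * ε ^ (-(3:ℝ)/8)) * (B * (16*(M+2)) ^ m) := by ring
      _ = ε ^ ((5:ℝ)/8) * (B * (16*(M+2)) ^ m) := by rw [h58]
  exact hlhs.trans hmid
end
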